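/- Let q ≥ 2 be a prime number and let B = B(q,q). Then the characteristic polynomial of the real q²×q² matrix Bᵀ B equals (X − q²)·(X − q)^{q(q−1)}·X^{q−1}; that is, B has a simple singular value q, q(q−1) singular values equal to √q, and q−1 singular values equal to 0. Moreover √q ≤ 2√(q−1), so B(q,q) defines a Ramanujan graph of degree q on q² vertices. -/

import Mathlib

/-!
The `((j, s), (j', s'))` entry of `BᵀB` counts the block rows `i` with `s + ij = s' + ij'` in
`ZMod q`. Since `q` is prime this is `q • [s = s']` when `j = j'` and exactly `1` otherwise, so
`N = BᵀB` is explicit. It is symmetric, and from `N (N - q) = q (q - 1) J` and `J N = q² J`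
(`J` the all-ones matrix) it is annihilated by `X (X - q) (X - q²)`, so its eigenvalues lie in
`{0, q, q²}`. The three multiplicities are then pinned down by the traces of `1`, `N` and
`N (N - q)`, which are `q²`, `q³` and `q³ (q - 1)`.
-/

open Matrix Polynomial

/-- The `q × q` cyclic-shift permutation matrix over `ℝ`:
`P i j = 1` iff `j ≡ i - 1 (mod q)`. -/
def cyclicShift (q : ℕ) : Matrix (Fin q) (Fin q) ℝ :=
  Matrix.of fun i j => if (j : ZMod q) = (i : ZMod q) - 1 then 1 else 0

/-- The `q² × lq` array-code matrix `B(q,l)`, with `q` block-rows and `l` block-columns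
of `q × q` blocks, whose `(i,j)` block (`0`-indexed) is `P^(i*j)`. -/
def arrayB (q l : ℕ) : Matrix (Fin q × Fin q) (Fin l × Fin q) ℝ :=
  Matrix.of fun r c => (cyclicShift q ^ ((r.1 : ℕ) * (c.1 : ℕ))) r.2 c.2

open Finset

@[to_additive]
lemma Finset.prod_comp_eq_prod_pow_card {ι κ M : Type*} [Fintype ι] [DecidableEq κ]
    [CommMonoid M] (f : ι → κ) {t : Finset κ} (hf : ∀ i, f i ∈ t) (g : κ → M) :
    ∏ i, g (f i) = ∏ y ∈ t, g y ^ #{i | f i = y} := by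
  simp_rw [← prod_const, prod_fiberwise_of_maps_to' fun i _ => hf i]

@[to_additive]
lemma prod_sq_self_zero_eq {M : Type*} [CommMonoid M] {x : ℝ} (hx : 2 ≤ x) (f : ℝ → M) :
    ∏ y ∈ ({x ^ 2, x, 0} : Finset ℝ), f y = f (x ^ 2) * f x * f 0 := by
  have hx₂ : x ^ 2 ∉ ({x, 0} : Finset ℝ) := by
    simp only [mem_insert, mem_singleton, not_or]
    constructor <;> nlinarith
  have hx₁ : x ∉ ({0} : Finset ℝ) := by
    simp only [mem_singleton]
    linarith
  rw [prod_insert hx₂, prod_insert hx₁, prod_singleton, mul_assoc]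

namespace Matrix.IsHermitian

variable {n 𝕜 : Type*} [RCLike 𝕜] [Fintype n] [DecidableEq n] {A : Matrix n n 𝕜}

lemma trace_aeval (hA : A.IsHermitian) (p : ℝ[X]) :
    (aeval A p).trace = ∑ i, ((p.eval (hA.eigenvalues i) : ℝ) : 𝕜) := by
  rw [← cfc_polynomial p A hA.isSelfAdjoint, hA.cfc_eq, IsHermitian.cfc,
    Unitary.conjStarAlgAut_apply, trace_mul_cycle, Unitary.coe_star_mul_self, one_mul,
    trace_diagonal]
  rfl

lemma eval_eigenvalues_eq_zero (hA : A.IsHermitian) {p : ℝ[X]} (hp : aeval A p = 0) (i : n) :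
    p.eval (hA.eigenvalues i) = 0 := by
  have : Nonempty n := ⟨i⟩
  simpa [hp] using
    spectrum.subset_polynomial_aeval A p ⟨_, hA.eigenvalues_mem_spectrum_real i, rfl⟩

variable (hA : A.IsHermitian) {t : Finset ℝ} (ht : ∀ i, hA.eigenvalues i ∈ t)
include ht

lemma trace_aeval_eq_sum_card (p : ℝ[X]) :
    (aeval A p).trace = ∑ y ∈ t, #{i | hA.eigenvalues i = y} • ((p.eval y : ℝ) : 𝕜) := by
  rw [hA.trace_aeval, sum_comp_eq_sum_nsmul_card _ ht fun y => ((p.eval y : ℝ) : 𝕜)]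

lemma charpoly_eq_prod_pow_card :
    A.charpoly = ∏ y ∈ t, (X - C (y : 𝕜)) ^ #{i | hA.eigenvalues i = y} := by
  rw [hA.charpoly_eq, prod_comp_eq_prod_pow_card _ ht fun y => X - C (y : 𝕜)]

end Matrix.IsHermitian

namespace Fin

lemma natCast_zmod_injective {q : ℕ} :
    Function.Injective fun i : Fin q => ((i : ℕ) : ZMod q) := by
  intro i j h
  ext
  simpa [ZMod.val_natCast_of_lt i.isLt, ZMod.val_natCast_of_lt j.isLt] using congrArg ZMod.val h

lemma sum_natCast_zmod {q : ℕ} [NeZero q] {M : Type*} [AddCommMonoid M] (f : ZMod q → M) :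
    ∑ i : Fin q, f i = ∑ z : ZMod q, f z :=
  Fintype.sum_bijective _ ((Fintype.bijective_iff_injective_and_card _).2
    ⟨natCast_zmod_injective, by simp⟩) _ _ fun _ => rfl

end Fin

lemma ZMod.sum_boole_eq_mul {q : ℕ} [Fact q.Prime] {M : Type*} [AddCommMonoidWithOne M]
    (c d : ZMod q) :
    ∑ x : ZMod q, (if c = x * d then (1 : M) else 0) =
      if d = 0 then (if c = 0 then (q : M) else 0) else 1 := by
  split_ifs with hd hc
  · simp [hd, hc]
  · simp [hd, hc]
  · have : ∀ x, c = x * d ↔ x = c / d := fun x => by rw [eq_div_iff hd, eq_comm]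
    simp [this]

lemma cyclicShift_pow_apply (q : ℕ) [NeZero q] (k : ℕ) (i j : Fin q) :
    (cyclicShift q ^ k) i j = if (j : ZMod q) = i - k then 1 else 0 := by
  induction k generalizing j with
  | zero => simp [one_apply, Fin.natCast_zmod_injective.eq_iff, eq_comm]
  | succ k ih =>
    rw [pow_succ, mul_apply]
    simp only [ih, ite_mul, one_mul, zero_mul]
    simp only [cyclicShift, of_apply]
    rw [Fin.sum_natCast_zmod (fun z => if z = (i : ZMod q) - (k : ZMod q) then
      (if (j : ZMod q) = z - 1 then (1 : ℝ) else 0) else 0), Fintype.sum_ite_eq']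
    simp [sub_sub]

lemma arrayB_transpose_mul_self_apply (q : ℕ) [NeZero q] (j s j' s' : Fin q) :
    ((arrayB q q)ᵀ * arrayB q q) (j, s) (j', s') =
      ∑ i : Fin q, if (s' : ZMod q) - s = i * (j - j') then 1 else 0 := by
  simp only [mul_apply, Fintype.sum_prod_type, transpose_apply, arrayB, of_apply,
    cyclicShift_pow_apply, ite_mul, one_mul, zero_mul]
  refine sum_congr rfl fun i _ => ?_
  push_cast
  simp only [eq_sub_iff_add_eq]
  rw [Fin.sum_natCast_zmod (fun z => if (s : ZMod q) + (i : ZMod q) * (j : ZMod q) = z then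
      (if (s' : ZMod q) + (i : ZMod q) * (j' : ZMod q) = z then (1 : ℝ) else 0) else 0),
    Fintype.sum_ite_eq]
  congr 1
  exact propext ⟨fun h => by linear_combination h, fun h => by linear_combination h⟩

def arrayGram (q : ℕ) : Matrix (Fin q × Fin q) (Fin q × Fin q) ℝ :=
  of fun r c => if r.1 = c.1 then if r.2 = c.2 then (q : ℝ) else 0 else 1

lemma arrayB_transpose_mul_self (q : ℕ) [Fact q.Prime] :
    (arrayB q q)ᵀ * arrayB q q = arrayGram q := by
  ext ⟨j, s⟩ ⟨j', s'⟩
  rw [arrayB_transpose_mul_self_apply, Fin.sum_natCast_zmod (fun x : ZMod q =>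
      if (s' : ZMod q) - s = x * (j - j') then (1 : ℝ) else 0), ZMod.sum_boole_eq_mul]
  simp [arrayGram, sub_eq_zero, Fin.natCast_zmod_injective.eq_iff, eq_comm]

section arrayGram

variable (q : ℕ)

lemma arrayGram_isHermitian : (arrayGram q).IsHermitian := by
  ext r c
  simp only [conjTranspose_apply, arrayGram, of_apply, star_trivial, eq_comm]

lemma arrayGram_sub_smul_one :
    arrayGram q - (q : ℝ) • 1 = of fun r c => if r.1 = c.1 then 0 else 1 := by
  ext ⟨j, s⟩ ⟨j', s'⟩
  by_cases hj : j = j' <;> by_cases hs : s = s' <;> simp [arrayGram, one_apply, hj, hs]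

lemma arrayGram_mul_sub_smul_one :
    arrayGram q * (arrayGram q - (q : ℝ) • 1) = ((q : ℝ) * (q - 1)) • of 1 := by
  rw [arrayGram_sub_smul_one]
  ext ⟨j, s⟩ ⟨j', s'⟩
  have hrow : ∑ x : Fin q, (if x = j' then 0 else (q : ℝ)) = q * (q - 1) := by
    simp [Finset.sum_ite, Finset.filter_ne', Nat.cast_pred j.pos, mul_comm]
  simpa [arrayGram, mul_apply, Fintype.sum_prod_type]

lemma of_one_mul_arrayGram : of 1 * arrayGram q = ((q : ℝ) ^ 2) • of 1 := by
  ext ⟨j, s⟩ ⟨j', s'⟩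
  simp [arrayGram, mul_apply, Fintype.sum_prod_type, sq]

lemma aeval_arrayGram :
    aeval (arrayGram q) (X * (X - C (q : ℝ)) * (X - C ((q : ℝ) ^ 2))) = 0 := by
  simp only [map_mul, map_sub, aeval_X, aeval_C, Algebra.algebraMap_eq_smul_one]
  rw [arrayGram_mul_sub_smul_one, smul_mul_assoc, Matrix.mul_sub, of_one_mul_arrayGram,
    Matrix.mul_smul, mul_one, sub_self, smul_zero]

lemma trace_arrayGram : (arrayGram q).trace = (q : ℝ) ^ 3 := by
  simp [trace, arrayGram, pow_succ]

lemma trace_aeval_arrayGram :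
    (aeval (arrayGram q) (X * (X - C (q : ℝ)))).trace = (q : ℝ) ^ 3 * (q - 1) := by
  simp only [map_mul, map_sub, aeval_X, aeval_C, Algebra.algebraMap_eq_smul_one]
  rw [arrayGram_mul_sub_smul_one, trace_smul]
  simp only [trace, diag_apply, of_apply, Pi.one_apply, sum_const, card_univ, Fintype.card_prod,
    Fintype.card_fin, nsmul_eq_mul, Nat.cast_mul, mul_one, smul_eq_mul]
  ring

lemma arrayGram_eigenvalues_mem (i : Fin q × Fin q) :
    (arrayGram_isHermitian q).eigenvalues i ∈ ({(q : ℝ) ^ 2, (q : ℝ), 0} : Finset ℝ) := by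
  have := (arrayGram_isHermitian q).eval_eigenvalues_eq_zero (aeval_arrayGram q) i
  simp only [eval_mul, eval_sub, eval_X, eval_C, mul_eq_zero, sub_eq_zero] at this
  simp only [mem_insert, mem_singleton]
  tauto

lemma card_arrayGram_eigenvalues (hq : 2 ≤ q) :
    #{i | (arrayGram_isHermitian q).eigenvalues i = (q : ℝ) ^ 2} = 1 ∧
      #{i | (arrayGram_isHermitian q).eigenvalues i = (q : ℝ)} = q * (q - 1) ∧
      #{i | (arrayGram_isHermitian q).eigenvalues i = 0} = q - 1 := by
  have hq' : (2 : ℝ) ≤ q := by exact_mod_cast hq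
  set n₂ := #{i | (arrayGram_isHermitian q).eigenvalues i = (q : ℝ) ^ 2}
  set n₁ := #{i | (arrayGram_isHermitian q).eigenvalues i = (q : ℝ)}
  set n₀ := #{i | (arrayGram_isHermitian q).eigenvalues i = 0}
  have hmoment (p : ℝ[X]) : (aeval (arrayGram q) p).trace =
      n₂ * p.eval ((q : ℝ) ^ 2) + n₁ * p.eval (q : ℝ) + n₀ * p.eval 0 := by
    rw [(arrayGram_isHermitian q).trace_aeval_eq_sum_card (arrayGram_eigenvalues_mem q),
      sum_sq_self_zero_eq hq']
    simp [n₀, n₁, n₂]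
  have hcard := hmoment 1
  have htr := hmoment X
  have htr2 := hmoment (X * (X - C (q : ℝ)))
  simp only [map_one, trace_one, Fintype.card_prod, Fintype.card_fin, aeval_X, trace_arrayGram,
    trace_aeval_arrayGram, eval_one, eval_X, eval_mul, eval_sub, eval_C] at hcard htr htr2
  have hq1 : ((q - 1 : ℕ) : ℝ) = q - 1 := Nat.cast_pred (by omega)
  have hq0 : (q : ℝ) ≠ 0 := (by linarith : (0 : ℝ) < q).ne'
  have h₂ : n₂ = 1 := by
    have h : (n₂ : ℝ) * ((q : ℝ) ^ 3 * (q - 1)) = 1 * ((q : ℝ) ^ 3 * (q - 1)) := by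
      linear_combination -htr2
    exact_mod_cast mul_right_cancel₀ (mul_ne_zero (pow_ne_zero 3 hq0) (by linarith)) h
  have h₁ : n₁ = q * (q - 1) := by
    have h : (n₁ : ℝ) * q = ((q * (q - 1) : ℕ) : ℝ) * q := by
      push_cast [hq1, h₂] at htr ⊢
      linear_combination -htr
    exact_mod_cast mul_right_cancel₀ hq0 h
  have h₀ : (n₀ : ℝ) = ((q - 1 : ℕ) : ℝ) := by
    push_cast [hq1, h₂, h₁] at hcard ⊢
    linear_combination -hcard
  exact ⟨h₂, h₁, by exact_mod_cast h₀⟩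

theorem charpoly_arrayGram (hq : 2 ≤ q) :
    (arrayGram q).charpoly =
      (X - C ((q : ℝ) ^ 2)) * (X - C (q : ℝ)) ^ (q * (q - 1)) * X ^ (q - 1) := by
  obtain ⟨h₂, h₁, h₀⟩ := card_arrayGram_eigenvalues q hq
  rw [(arrayGram_isHermitian q).charpoly_eq_prod_pow_card (arrayGram_eigenvalues_mem q),
    prod_sq_self_zero_eq (by exact_mod_cast hq), h₂, h₁, h₀]
  simp

end arrayGram

lemma Real.sqrt_le_two_mul_sqrt_sub_one {x : ℝ} (hx : 4 / 3 ≤ x) : √x ≤ 2 * √(x - 1) :=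
  calc √x ≤ √(2 ^ 2 * (x - 1)) := Real.sqrt_le_sqrt (by linarith)
    _ = 2 * √(x - 1) := by rw [Real.sqrt_mul (by positivity), Real.sqrt_sq zero_le_two]

/-- For `l = q`, `B(q,q)` is the adjacency matrix of a `q`-regular Ramanujan graph on
`q²` vertices: its singular values are `q` (simple), `√q` with multiplicity `q(q-1)`
and `0` with multiplicity `q-1`, and `√q ≤ 2√(q-1)`. -/
theorem arrayB_self_ramanujan (q : ℕ) (hq : q.Prime) (hq2 : 2 ≤ q) :
    ((arrayB q q)ᵀ * arrayB q q).charpoly =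
        (X - C ((q : ℝ) ^ 2)) * (X - C (q : ℝ)) ^ (q * (q - 1)) * X ^ (q - 1) ∧
      Real.sqrt (q : ℝ) ≤ 2 * Real.sqrt ((q : ℝ) - 1) := by
  have : Fact q.Prime := ⟨hq⟩
  refine ⟨by rw [arrayB_transpose_mul_self, charpoly_arrayGram q hq2], ?_⟩
  have hq2' : (2 : ℝ) ≤ q := by exact_mod_cast hq2
  exact Real.sqrt_le_two_mul_sqrt_sub_one (by linarith)
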